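/- arXiv:1609.01255 — 3 statements merged into one kernel-verified Lean document; each statement's English description precedes it below -/
import Mathlib

section
/- Fix ℓ > 0 and a nonzero constant. Define û : ℝ^5 → ℝ by û(ξ_1, ξ_2, ξ_3, ξ_4, ξ_5) = −e^{ξ_3} (e^{ξ_4} / e^{2ξ_5}) (1 − Ha(ξ) · cosh(Ha(ξ))/sinh(Ha(ξ))), where Ha(ξ) = e^{ξ_5} ℓ / √(e^{ξ_4} e^{ξ_1}); equivalently, û is the Hartmann average velocity u_avg(μ, ρ, p', η, B_0) = −p'(η/B_0²)(1 − Ha·coth(Ha)) evaluated at μ = e^{ξ_1}, ρ = e^{ξ_2}, p' = e^{ξ_3}, η = e^{ξ_4}, B_0 = e^{ξ_5}. Then û is differentiable and, for every ξ ∈ ℝ^5, the gradient ∇û(ξ) lies in the two-dimensional subspace of ℝ^5 spanned by the vectors a = (0, 0, 1, 1, −2) and b = (−1/2, 0, 0, −1/2, 1). -/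
/-!
In the log variables the prefactor `p'η/B₀²` is `exp ⟪a, ξ⟫` and the Hartmann number is
`Ha = ℓ exp ⟪b, ξ⟫`, so `û ξ = F (⟪a, ξ⟫, ⟪b, ξ⟫)` with `F (s, t) = -eˢ (1 - Ha coth Ha)`,
`Ha = ℓ eᵗ`. By the chain rule `∇û ξ = ∂ₛF · a + ∂ₜF · b`, and `F` is differentiable
because `Ha > 0` keeps `sinh Ha` away from zero.
-/

open Real InnerProductSpace

section Ridge

variable {E : Type*} [NormedAddCommGroup E] [InnerProductSpace ℝ E] [CompleteSpace E]

theorem hasGradientAt_comp_inner_prod {F : ℝ × ℝ → ℝ} {F' : ℝ × ℝ →L[ℝ] ℝ} {a b x : E}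
    (hF : HasFDerivAt F F' (⟪a, x⟫_ℝ, ⟪b, x⟫_ℝ)) :
    HasGradientAt (fun y => F (⟪a, y⟫_ℝ, ⟪b, y⟫_ℝ)) (F' (1, 0) • a + F' (0, 1) • b) x := by
  rw [hasGradientAt_iff_hasFDerivAt]
  have hL : HasFDerivAt (fun y : E => (⟪a, y⟫_ℝ, ⟪b, y⟫_ℝ))
      ((innerSL ℝ a).prod (innerSL ℝ b)) x :=
    ((innerSL ℝ a).prod (innerSL ℝ b)).hasFDerivAt
  refine (hF.comp x hL).congr_fderiv (ContinuousLinearMap.ext fun v => ?_)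
  have hv : (⟪a, v⟫_ℝ, ⟪b, v⟫_ℝ) =
      ⟪a, v⟫_ℝ • ((1 : ℝ), (0 : ℝ)) + ⟪b, v⟫_ℝ • ((0 : ℝ), (1 : ℝ)) := by
    ext <;> simp
  simp only [ContinuousLinearMap.comp_apply, ContinuousLinearMap.prod_apply, innerSL_apply_apply,
    hv, map_add, map_smul, add_apply, smul_apply, toDual_apply_apply, smul_eq_mul]
  ring

theorem gradient_comp_inner_prod_mem_span {F : ℝ × ℝ → ℝ} {a b x : E}
    (hF : DifferentiableAt ℝ F (⟪a, x⟫_ℝ, ⟪b, x⟫_ℝ)) :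
    gradient (fun y => F (⟪a, y⟫_ℝ, ⟪b, y⟫_ℝ)) x ∈ Submodule.span ℝ {a, b} := by
  rw [(hasGradientAt_comp_inner_prod hF.hasFDerivAt).gradient]
  exact add_mem (Submodule.smul_mem _ _ (Submodule.subset_span (by simp)))
    (Submodule.smul_mem _ _ (Submodule.subset_span (by simp)))

end Ridge

theorem differentiableAt_mul_coth {x : ℝ} (hx : x ≠ 0) :
    DifferentiableAt ℝ (fun x => x * (cosh x / sinh x)) x := by
  have : sinh x ≠ 0 := by simpa using hx
  fun_prop (disch := exact this)

theorem inner_euclideanSpace_fin_five (c₀ c₁ c₂ c₃ c₄ : ℝ) (ξ : EuclideanSpace ℝ (Fin 5)) :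
    ⟪!₂[c₀, c₁, c₂, c₃, c₄], ξ⟫_ℝ = c₀ * ξ 0 + c₁ * ξ 1 + c₂ * ξ 2 + c₃ * ξ 3 + c₄ * ξ 4 := by
  simp [PiLp.inner_apply, Fin.sum_univ_five, mul_comm]

/-- The profile `F (s, t)` of the ridge, `s = log (p'η/B₀²)`, `t = log (Ha/ℓ)`. -/
noncomputable def hartmannRidge (ℓ : ℝ) (p : ℝ × ℝ) : ℝ :=
  -exp p.1 * (1 - ℓ * exp p.2 * (cosh (ℓ * exp p.2) / sinh (ℓ * exp p.2)))

theorem differentiable_hartmannRidge {ℓ : ℝ} (hℓ : ℓ ≠ 0) :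
    Differentiable ℝ (hartmannRidge ℓ) := by
  have hHa : Differentiable ℝ fun t => ℓ * exp t * (cosh (ℓ * exp t) / sinh (ℓ * exp t)) :=
    fun t => (differentiableAt_mul_coth (by positivity)).comp t (by fun_prop)
  exact differentiable_fst.exp.neg.mul ((differentiable_const 1).sub (hHa.comp differentiable_snd))

theorem exp_mul_div_sqrt_exp_mul_exp (ℓ x y z : ℝ) :
    exp z * ℓ / √(exp y * exp x) = ℓ * exp (-(1 / 2) * x - (1 / 2) * y + z) := by
  rw [← exp_add, sqrt_eq_rpow, ← exp_mul, div_eq_mul_inv, ← exp_neg, mul_right_comm, ← exp_add]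
  ring_nf

theorem hartmann_eq_hartmannRidge (ℓ : ℝ) (ξ : EuclideanSpace ℝ (Fin 5)) :
    -(exp (ξ 2)) * (exp (ξ 3) / exp (2 * ξ 4)) *
        (1 - (exp (ξ 4) * ℓ / √(exp (ξ 3) * exp (ξ 0))) *
          (cosh (exp (ξ 4) * ℓ / √(exp (ξ 3) * exp (ξ 0))) /
           sinh (exp (ξ 4) * ℓ / √(exp (ξ 3) * exp (ξ 0))))) =
      hartmannRidge ℓ (⟪!₂[0, 0, 1, 1, -2], ξ⟫_ℝ, ⟪!₂[-1/2, 0, 0, -1/2, 1], ξ⟫_ℝ) := by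
  have ha : ⟪!₂[0, 0, 1, 1, -2], ξ⟫_ℝ = ξ 2 + ξ 3 - 2 * ξ 4 := by
    rw [inner_euclideanSpace_fin_five]
    ring
  have hb : ⟪!₂[-1/2, 0, 0, -1/2, 1], ξ⟫_ℝ = -(1 / 2) * ξ 0 - (1 / 2) * ξ 3 + ξ 4 := by
    rw [inner_euclideanSpace_fin_five]
    ring
  rw [hartmannRidge, ha, hb, exp_sub, exp_add, exp_mul_div_sqrt_exp_mul_exp]
  ring

/-- **Ridge structure of the Hartmann average velocity in log variables.** With `ℓ > 0` fixed,
the Hartmann average velocity `u_avg = −p'(η/B₀²)(1 − Ha·coth Ha)`, `Ha = B₀ℓ/√(ημ)`,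
evaluated at `μ = e^{ξ₀}`, `ρ = e^{ξ₁}`, `p' = e^{ξ₂}`, `η = e^{ξ₃}`, `B₀ = e^{ξ₄}`, is a
differentiable function of `ξ ∈ ℝ⁵` whose gradient everywhere lies in the span of
`a = (0,0,1,1,−2)` and `b = (−1/2,0,0,−1/2,1)`. -/
theorem stmt13 (ℓ : ℝ) (hℓ : 0 < ℓ)
    (u : EuclideanSpace ℝ (Fin 5) → ℝ)
    (hu : ∀ ξ : EuclideanSpace ℝ (Fin 5),
      u ξ = -(Real.exp (ξ 2)) * (Real.exp (ξ 3) / Real.exp (2 * ξ 4)) *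
        (1 - (Real.exp (ξ 4) * ℓ / Real.sqrt (Real.exp (ξ 3) * Real.exp (ξ 0))) *
          (Real.cosh (Real.exp (ξ 4) * ℓ / Real.sqrt (Real.exp (ξ 3) * Real.exp (ξ 0))) /
           Real.sinh (Real.exp (ξ 4) * ℓ / Real.sqrt (Real.exp (ξ 3) * Real.exp (ξ 0))))))
    (a b : EuclideanSpace ℝ (Fin 5))
    (ha : a = !₂[0, 0, 1, 1, -2]) (hb : b = !₂[-1/2, 0, 0, -1/2, 1]) :
    Differentiable ℝ u ∧
    ∀ ξ : EuclideanSpace ℝ (Fin 5),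
      gradient u ξ ∈ Submodule.span ℝ ({a, b} : Set (EuclideanSpace ℝ (Fin 5))) := by
  have hu_ridge : u = fun ξ => hartmannRidge ℓ (⟪a, ξ⟫_ℝ, ⟪b, ξ⟫_ℝ) := by
    subst ha hb
    exact funext fun ξ => (hu ξ).trans (hartmann_eq_hartmannRidge ℓ ξ)
  have hF := differentiable_hartmannRidge hℓ.ne'
  subst hu_ridge
  exact ⟨hF.comp ((innerSL ℝ a).prod (innerSL ℝ b)).differentiable,
    fun ξ => gradient_comp_inner_prod_mem_span (hF _)⟩
end

section
/- Fix ℓ > 0 and μ_0 > 0. Define B̂ : ℝ^5 → ℝ as the Hartmann induced magnetic field B_ind(μ, ρ, p', η, B_0) = p' (ℓ μ_0/(2B_0)) (1 − (2√(ημ)/(B_0 ℓ)) tanh(B_0 ℓ/(2√(ημ)))) evaluated at μ = e^{ξ_1}, ρ = e^{ξ_2}, p' = e^{ξ_3}, η = e^{ξ_4}, B_0 = e^{ξ_5}. Then B̂ is differentiable and, for every ξ ∈ ℝ^5, the gradient ∇B̂(ξ) lies in the two-dimensional subspace of ℝ^5 spanned by the vectors a' = (0, 0, 1, 0, −1) and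 b = (−1/2, 0, 0, −1/2, 1); in particular, the second component of ∇B̂(ξ) is zero for all ξ. -/
/-!
Since `√(ημ) = exp ((ξ 3 + ξ 0) / 2)`, in log coordinates the field depends on `ξ` only through
`⟪a', ξ⟫ = ξ 2 - ξ 4 = log (p' / B₀)` and `⟪b, ξ⟫ = ξ 4 - (ξ 3 + ξ 0) / 2 = log (Ha / ℓ)`.
By the chain rule the gradient of a ridge function `ξ ↦ g (⟪a', ξ⟫, ⟪b, ξ⟫)` is a combination
of `a'` and `b`, and neither vector has a density component.
-/

open Real InnerProductSpace

section Ridge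

variable {E ι : Type*} [NormedAddCommGroup E] [InnerProductSpace ℝ E] [CompleteSpace E]
  [Fintype ι] [DecidableEq ι]

theorem hasGradientAt_comp_inner {g : (ι → ℝ) → ℝ} {v : ι → E} {x : E}
    (hg : DifferentiableAt ℝ g fun i => ⟪v i, x⟫_ℝ) :
    HasGradientAt (fun y => g fun i => ⟪v i, y⟫_ℝ)
      (∑ i, fderiv ℝ g (fun i => ⟪v i, x⟫_ℝ) (Pi.single i 1) • v i) x := by
  set L : E →L[ℝ] ι → ℝ := ContinuousLinearMap.pi fun i => innerSL ℝ (v i)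
  rw [hasGradientAt_iff_hasFDerivAt]
  have hL : HasFDerivAt L L x := L.hasFDerivAt
  have hgL : HasFDerivAt g (fderiv ℝ g (L x)) (L x) := hg.hasFDerivAt
  refine (hgL.comp x hL).congr_fderiv ?_
  refine ContinuousLinearMap.ext fun (w : E) => ?_
  conv_lhs => rw [ContinuousLinearMap.comp_apply, ← Finset.univ_sum_single (L w)]
  simp only [L, ContinuousLinearMap.coe_pi', coe_innerSL_apply, map_sum, map_smul,
    _root_.sum_apply, smul_apply, toDual_apply_apply]
  refine Finset.sum_congr rfl fun i _ => ?_
  rw [smul_eq_mul, mul_comm, ← smul_eq_mul, ← map_smul, ← Pi.single_smul, smul_eq_mul, mul_one]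

theorem gradient_comp_inner_mem_span {g : (ι → ℝ) → ℝ} (hg : Differentiable ℝ g) (v : ι → E)
    (x : E) :
    gradient (fun y => g fun i => ⟪v i, y⟫_ℝ) x ∈ Submodule.span ℝ (Set.range v) := by
  rw [(hasGradientAt_comp_inner (hg _)).gradient]
  exact Submodule.sum_mem _ fun i _ => Submodule.smul_mem _ _ (Submodule.subset_span ⟨i, rfl⟩)

end Ridge

theorem Real.differentiable_tanh : Differentiable ℝ tanh := by
  rw [show tanh = sinh / cosh from funext tanh_eq_sinh_div_cosh]
  exact differentiable_sinh.div differentiable_cosh fun x => (cosh_pos x).ne'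

noncomputable def hartmannInducedField (ℓ μ₀ μ p' η B₀ : ℝ) : ℝ :=
  p' * (ℓ * μ₀ / (2 * B₀)) * (1 - 2 * √(η * μ) / (B₀ * ℓ) * tanh (B₀ * ℓ / (2 * √(η * μ))))

/-- The induced field in the variables `y 0 = log (p' / B₀)` and `y 1 = log (B₀ / √(ημ))`,
so that `ℓ * exp (y 1)` is the Hartmann number. -/
noncomputable def hartmannRidgeProfile (ℓ μ₀ : ℝ) (y : Fin 2 → ℝ) : ℝ :=
  ℓ * μ₀ / 2 * exp (y 0) * (1 - 2 * (ℓ * exp (y 1))⁻¹ * tanh (ℓ * exp (y 1) / 2))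

theorem differentiable_hartmannRidgeProfile {ℓ : ℝ} (hℓ : ℓ ≠ 0) (μ₀ : ℝ) :
    Differentiable ℝ (hartmannRidgeProfile ℓ μ₀) := by
  have hHa : Differentiable ℝ fun y : Fin 2 → ℝ => ℓ * exp (y 1) := by fun_prop
  have hinv : Differentiable ℝ fun y : Fin 2 → ℝ => (ℓ * exp (y 1))⁻¹ :=
    hHa.fun_inv fun y => mul_ne_zero hℓ (exp_ne_zero _)
  have htanh := Real.differentiable_tanh
  unfold hartmannRidgeProfile
  fun_prop

theorem hartmannInducedField_exp {ℓ : ℝ} (hℓ : ℓ ≠ 0) (μ₀ a c d e : ℝ) :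
    hartmannInducedField ℓ μ₀ (exp a) (exp c) (exp d) (exp e) =
      hartmannRidgeProfile ℓ μ₀ ![c - e, e - (d + a) / 2] := by
  have hsqrt : √(exp d * exp a) = exp ((d + a) / 2) := by
    rw [← exp_add, sqrt_eq_iff_mul_self_eq_of_pos (exp_pos _), ← exp_add]
    ring_nf
  have he : exp e ≠ 0 := exp_ne_zero e
  have hda : exp ((d + a) / 2) ≠ 0 := exp_ne_zero _
  simp only [hartmannInducedField, hartmannRidgeProfile, hsqrt, Matrix.cons_val_zero,
    Matrix.cons_val_one, exp_sub]
  field_simp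

theorem stmt14_general (ℓ μ₀ : ℝ) (hℓ : 0 < ℓ)
    (B : EuclideanSpace ℝ (Fin 5) → ℝ)
    (hB : ∀ ξ : EuclideanSpace ℝ (Fin 5),
      B ξ = Real.exp (ξ 2) * (ℓ * μ₀ / (2 * Real.exp (ξ 4))) *
        (1 - (2 * Real.sqrt (Real.exp (ξ 3) * Real.exp (ξ 0)) / (Real.exp (ξ 4) * ℓ)) *
          Real.tanh (Real.exp (ξ 4) * ℓ /
            (2 * Real.sqrt (Real.exp (ξ 3) * Real.exp (ξ 0))))))
    (a' b : EuclideanSpace ℝ (Fin 5))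
    (ha' : a' = WithLp.toLp 2 (![0, 0, 1, 0, -1] : Fin 5 → ℝ))
    (hb : b = WithLp.toLp 2 (![-1/2, 0, 0, -1/2, 1] : Fin 5 → ℝ)) :
    Differentiable ℝ B ∧
    (∀ ξ : EuclideanSpace ℝ (Fin 5),
      gradient B ξ ∈ Submodule.span ℝ ({a', b} : Set (EuclideanSpace ℝ (Fin 5)))) ∧
    ∀ ξ : EuclideanSpace ℝ (Fin 5), gradient B ξ 1 = 0 := by
  have hridge : B = fun ξ => hartmannRidgeProfile ℓ μ₀ fun i => ⟪![a', b] i, ξ⟫_ℝ := by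
    funext ξ
    have hinner : (fun i => ⟪![a', b] i, ξ⟫_ℝ) = ![ξ 2 - ξ 4, ξ 4 - (ξ 3 + ξ 0) / 2] := by
      ext i
      fin_cases i <;> simp [ha', hb, PiLp.inner_apply, Fin.sum_univ_five] <;> ring
    rw [hinner, ← hartmannInducedField_exp hℓ.ne', hB]
    rfl
  have hspan (ξ : EuclideanSpace ℝ (Fin 5)) : gradient B ξ ∈ Submodule.span ℝ {a', b} := by
    rw [hridge, ← Matrix.range_cons_cons_empty]
    exact gradient_comp_inner_mem_span (differentiable_hartmannRidgeProfile hℓ.ne' μ₀) _ ξ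
  have hcoord : Submodule.span ℝ {a', b} ≤
      LinearMap.ker (EuclideanSpace.proj 1 : EuclideanSpace ℝ (Fin 5) →L[ℝ] ℝ).toLinearMap := by
    rw [Submodule.span_le]
    simp [Set.insert_subset_iff, ha', hb]
  refine ⟨?_, hspan, fun ξ => hcoord (hspan ξ)⟩
  rw [hridge]
  exact (differentiable_hartmannRidgeProfile hℓ.ne' μ₀).comp
    (differentiable_pi.2 fun i => (innerSL ℝ (![a', b] i)).differentiable)

/-- **Ridge structure of the Hartmann induced magnetic field in log variables.** With
`ℓ > 0`, `μ₀ > 0` fixed, the induced field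
`B_ind = p'(ℓμ₀/(2B₀))(1 − (2√(ημ)/(B₀ℓ))·tanh(B₀ℓ/(2√(ημ))))` evaluated at `μ = e^{ξ₀}`,
`ρ = e^{ξ₁}`, `p' = e^{ξ₂}`, `η = e^{ξ₃}`, `B₀ = e^{ξ₄}` is differentiable in `ξ ∈ ℝ⁵` with
gradient everywhere in the span of `a' = (0,0,1,0,−1)` and `b = (−1/2,0,0,−1/2,1)`; in
particular the second component of the gradient vanishes identically. -/
theorem stmt14 (ℓ μ₀ : ℝ) (hℓ : 0 < ℓ) (hμ₀ : 0 < μ₀)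
    (B : EuclideanSpace ℝ (Fin 5) → ℝ)
    (hB : ∀ ξ : EuclideanSpace ℝ (Fin 5),
      B ξ = Real.exp (ξ 2) * (ℓ * μ₀ / (2 * Real.exp (ξ 4))) *
        (1 - (2 * Real.sqrt (Real.exp (ξ 3) * Real.exp (ξ 0)) / (Real.exp (ξ 4) * ℓ)) *
          Real.tanh (Real.exp (ξ 4) * ℓ /
            (2 * Real.sqrt (Real.exp (ξ 3) * Real.exp (ξ 0))))))
    (a' b : EuclideanSpace ℝ (Fin 5))
    (ha' : a' = WithLp.toLp 2 (![0, 0, 1, 0, -1] : Fin 5 → ℝ))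
    (hb : b = WithLp.toLp 2 (![-1/2, 0, 0, -1/2, 1] : Fin 5 → ℝ)) :
    Differentiable ℝ B ∧
    (∀ ξ : EuclideanSpace ℝ (Fin 5),
      gradient B ξ ∈ Submodule.span ℝ ({a', b} : Set (EuclideanSpace ℝ (Fin 5)))) ∧
    ∀ ξ : EuclideanSpace ℝ (Fin 5), gradient B ξ 1 = 0 :=
  stmt14_general ℓ μ₀ hℓ B hB a' b ha' hb
end

section
/- Fix ℓ > 0. Let û : ℝ^5 → ℝ be the Hartmann average velocity in log-transformed variables, û(ξ) = −e^{ξ_3}(e^{ξ_4}/e^{2ξ_5})(1 − Ha(ξ)·cosh(Ha(ξ))/sinh(Ha(ξ))) with Ha(ξ) = e^{ξ_5}ℓ/√(e^{ξ_4} e^{ξ_1}). Let γ be any probability measure on ℝ^5 for which each partial derivative of û is square-integrable, and let C = ∫ ∇û(ξ) ∇û(ξ)ᵀ dγ(ξ) be the 5×5 active-subspace matrix. Then rank(C) ≤ 2, and every eigenvector of C with nonzero eigenvalue lies in the span of a = (0, 0, 1, 1, −2) and b = (−1/2, 0, 0, −1/2, 1). -/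
/-!
In the log variables the Hartmann velocity is a ridge function,
`û ξ = -exp ⟪a, ξ⟫ · h (ℓ · exp ⟪b, ξ⟫)` with `h x = 1 - x coth x`, because `Ha(ξ) = ℓ exp ⟪b, ξ⟫`.
Hence `⟪y, ∇û ξ⟫ = 0` for every `y ⊥ span {a, b}` and every `ξ`, and so
`⟪y, C w⟫ = ∫ ⟪y, ∇û⟫ ⟪∇û, w⟫ dγ = 0`: the range of `C` lies in `span {a, b}`.
-/

open Matrix MeasureTheory
open Real Submodule Set Module
open scoped RealInnerProductSpace

section ActiveSubspaceMatrix

variable {Ω ι : Type*} [MeasurableSpace Ω] [Fintype ι] {μ : Measure Ω}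
  {g : Ω → EuclideanSpace ℝ ι} {C : Matrix ι ι ℝ} {W : Submodule ℝ (EuclideanSpace ℝ ι)}

theorem inner_toLp_mulVec_eq_integral (hg : ∀ i, MemLp (fun ξ => g ξ i) 2 μ)
    (hC : ∀ i j, C i j = ∫ ξ, g ξ i * g ξ j ∂μ) (v w : EuclideanSpace ℝ ι) :
    ⟪v, WithLp.toLp 2 (C *ᵥ w)⟫ = ∫ ξ, ⟪v, g ξ⟫ * ⟪g ξ, w⟫ ∂μ := by
  have hint : ∀ i j, Integrable (fun ξ => v i * w j * (g ξ i * g ξ j)) μ := fun i j =>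
    ((hg i).integrable_mul (hg j)).const_mul _
  have hexpand : ∀ ξ, ⟪v, g ξ⟫ * ⟪g ξ, w⟫ = ∑ i, ∑ j, v i * w j * (g ξ i * g ξ j) := by
    intro ξ
    simp only [PiLp.inner_apply, RCLike.inner_apply, conj_trivial, Finset.sum_mul_sum]
    exact Finset.sum_congr rfl fun i _ => Finset.sum_congr rfl fun j _ => by ring
  simp only [hexpand]
  rw [integral_finsetSum _ fun i _ => integrable_finsetSum _ fun j _ => hint i j]
  simp only [integral_finsetSum _ fun j _ => hint _ j, integral_const_mul, ← hC,
    PiLp.inner_apply, RCLike.inner_apply, conj_trivial, mulVec, dotProduct, Finset.sum_mul]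
  exact Finset.sum_congr rfl fun i _ => Finset.sum_congr rfl fun j _ => by ring

theorem toLp_mulVec_mem_of_ae_mem (hg : ∀ i, MemLp (fun ξ => g ξ i) 2 μ)
    (hC : ∀ i j, C i j = ∫ ξ, g ξ i * g ξ j ∂μ) (hW : ∀ᵐ ξ ∂μ, g ξ ∈ W)
    (w : EuclideanSpace ℝ ι) : WithLp.toLp 2 (C *ᵥ w) ∈ W := by
  rw [← W.orthogonal_orthogonal, mem_orthogonal]
  intro y hy
  rw [inner_toLp_mulVec_eq_integral hg hC]
  refine integral_eq_zero_of_ae (hW.mono fun ξ hξ => ?_)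
  simp [inner_left_of_mem_orthogonal hξ hy]

theorem rank_le_finrank_of_toLp_mulVec_mem
    (h : ∀ w : EuclideanSpace ℝ ι, WithLp.toLp 2 (C *ᵥ w) ∈ W) : C.rank ≤ finrank ℝ W := by
  rw [Matrix.rank, ← (WithLp.linearEquiv 2 ℝ (ι → ℝ)).finrank_map_eq W]
  apply Submodule.finrank_mono
  rintro _ ⟨w, rfl⟩
  exact ⟨_, h (WithLp.toLp 2 w), rfl⟩

theorem mem_of_mulVec_eq_smul (h : ∀ w : EuclideanSpace ℝ ι, WithLp.toLp 2 (C *ᵥ w) ∈ W)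
    {lam : ℝ} {w : EuclideanSpace ℝ ι} (hlam : lam ≠ 0) (hw : C *ᵥ w = lam • w) : w ∈ W := by
  have := W.smul_mem lam⁻¹ (h w)
  rwa [hw, WithLp.toLp_smul, WithLp.toLp_ofLp, inv_smul_smul₀ hlam] at this

end ActiveSubspaceMatrix

section Ridge

variable {E κ : Type*} [NormedAddCommGroup E] [InnerProductSpace ℝ E] [CompleteSpace E] [Fintype κ]

theorem gradient_ridge_mem_span (v : κ → E) {f : (κ → ℝ) → ℝ} {ξ : E}
    (hf : DifferentiableAt ℝ f fun k => ⟪v k, ξ⟫) :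
    gradient (fun x => f fun k => ⟪v k, x⟫) ξ ∈ span ℝ (range v) := by
  set P : E →L[ℝ] κ → ℝ := ContinuousLinearMap.pi fun k => innerSL ℝ (v k)
  have hfd : fderiv ℝ (fun x => f fun k => ⟪v k, x⟫) ξ = (fderiv ℝ f (P ξ)).comp P :=
    (hf.hasFDerivAt.comp ξ P.hasFDerivAt).fderiv
  have : FiniteDimensional ℝ (span ℝ (range v)) := .span_of_finite ℝ (finite_range v)
  rw [← (span ℝ (range v)).orthogonal_orthogonal, mem_orthogonal]
  intro y hy
  have hPy : P y = 0 := funext fun k =>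
    inner_right_of_mem_orthogonal (subset_span (mem_range_self k)) hy
  rw [real_inner_comm, gradient, InnerProductSpace.toDual_symm_apply, hfd,
    ContinuousLinearMap.comp_apply, hPy, map_zero]

end Ridge

section Hartmann

noncomputable def hartmannFactor (x : ℝ) : ℝ := 1 - x * (cosh x / sinh x)

theorem differentiableAt_hartmannFactor {x : ℝ} (hx : x ≠ 0) :
    DifferentiableAt ℝ hartmannFactor x := by
  have : sinh x ≠ 0 := sinh_ne_zero.mpr hx
  unfold hartmannFactor
  fun_prop (disch := exact this)

theorem inner_hartmann_a (ξ : EuclideanSpace ℝ (Fin 5)) :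
    ⟪!₂[0, 0, 1, 1, -2], ξ⟫ = ξ 2 + ξ 3 - 2 * ξ 4 := by
  simp only [PiLp.inner_apply, RCLike.inner_apply, conj_trivial, Fin.sum_univ_five, Matrix.cons_val]
  ring

theorem inner_hartmann_b (ξ : EuclideanSpace ℝ (Fin 5)) :
    ⟪!₂[-1/2, 0, 0, -1/2, 1], ξ⟫ = ξ 4 - (ξ 3 + ξ 0) / 2 := by
  simp only [PiLp.inner_apply, RCLike.inner_apply, conj_trivial, Fin.sum_univ_five, Matrix.cons_val]
  ring

theorem hartmann_log_velocity_eq (ℓ : ℝ) (ξ : EuclideanSpace ℝ (Fin 5)) :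
    -(exp (ξ 2)) * (exp (ξ 3) / exp (2 * ξ 4)) *
        (1 - (exp (ξ 4) * ℓ / √(exp (ξ 3) * exp (ξ 0))) *
          (cosh (exp (ξ 4) * ℓ / √(exp (ξ 3) * exp (ξ 0))) /
           sinh (exp (ξ 4) * ℓ / √(exp (ξ 3) * exp (ξ 0)))))
      = -exp ⟪!₂[0, 0, 1, 1, -2], ξ⟫ * hartmannFactor (ℓ * exp ⟪!₂[-1/2, 0, 0, -1/2, 1], ξ⟫) := by
  have hsqrt : √(exp (ξ 3) * exp (ξ 0)) = exp ((ξ 3 + ξ 0) / 2) := by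
    rw [← exp_add, ← sqrt_mul_self (exp_pos ((ξ 3 + ξ 0) / 2)).le, ← exp_add, add_halves]
  have hHa :
      exp (ξ 4) * ℓ / √(exp (ξ 3) * exp (ξ 0)) = ℓ * exp ⟪!₂[-1/2, 0, 0, -1/2, 1], ξ⟫ := by
    rw [hsqrt, inner_hartmann_b, exp_sub]
    ring
  have hprefactor : exp (ξ 2) * (exp (ξ 3) / exp (2 * ξ 4)) = exp ⟪!₂[0, 0, 1, 1, -2], ξ⟫ := by
    rw [inner_hartmann_a, exp_sub, exp_add]
    ring
  rw [hHa, ← hprefactor, hartmannFactor]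
  ring

end Hartmann

theorem stmt15_general (ℓ : ℝ) (hℓ : 0 < ℓ)
    (u : EuclideanSpace ℝ (Fin 5) → ℝ)
    (hu : ∀ ξ : EuclideanSpace ℝ (Fin 5),
      u ξ = -(Real.exp (ξ 2)) * (Real.exp (ξ 3) / Real.exp (2 * ξ 4)) *
        (1 - (Real.exp (ξ 4) * ℓ / Real.sqrt (Real.exp (ξ 3) * Real.exp (ξ 0))) *
          (Real.cosh (Real.exp (ξ 4) * ℓ / Real.sqrt (Real.exp (ξ 3) * Real.exp (ξ 0))) /
           Real.sinh (Real.exp (ξ 4) * ℓ / Real.sqrt (Real.exp (ξ 3) * Real.exp (ξ 0))))))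
    (γ : Measure (EuclideanSpace ℝ (Fin 5)))
    (hL2 : ∀ i : Fin 5, MemLp (fun ξ => gradient u ξ i) 2 γ)
    (C : Matrix (Fin 5) (Fin 5) ℝ)
    (hC : ∀ i j, C i j = ∫ ξ, gradient u ξ i * gradient u ξ j ∂γ)
    (a b : EuclideanSpace ℝ (Fin 5))
    (ha : a = !₂[0, 0, 1, 1, -2]) (hb : b = !₂[-1/2, 0, 0, -1/2, 1]) :
    C.rank ≤ 2 ∧
    ∀ (lam : ℝ) (w : EuclideanSpace ℝ (Fin 5)), lam ≠ 0 → C *ᵥ w = lam • w →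
      w ∈ Submodule.span ℝ ({a, b} : Set (EuclideanSpace ℝ (Fin 5))) := by
  set f : (Fin 2 → ℝ) → ℝ := fun y => -exp (y 0) * hartmannFactor (ℓ * exp (y 1))
  have hridge : u = fun ξ => f fun k => ⟪![a, b] k, ξ⟫ := by
    funext ξ
    rw [hu, hartmann_log_velocity_eq, ha, hb]
    rfl
  have hgrad : ∀ ξ, gradient u ξ ∈ span ℝ {a, b} := fun ξ => by
    have hHa := differentiableAt_hartmannFactor (x := ℓ * exp ⟪b, ξ⟫) (by positivity)
    rw [← range_cons_cons_empty a b ![], hridge]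
    exact gradient_ridge_mem_span ![a, b] (by fun_prop (disch := exact hHa))
  have hrange := toLp_mulVec_mem_of_ae_mem hL2 hC (ae_of_all γ hgrad)
  refine ⟨(rank_le_finrank_of_toLp_mulVec_mem hrange).trans ?_,
    fun lam w hlam hw => mem_of_mulVec_eq_smul hrange hlam hw⟩
  rw [← range_cons_cons_empty a b ![]]
  exact finrank_range_le_card _

/-- **Rank bound for the Hartmann active-subspace matrix.** Let `û` be the Hartmann average
velocity in log-transformed variables (`Ha(ξ) = e^{ξ₄}ℓ/√(e^{ξ₃}e^{ξ₀})`), let `γ` be a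
probability measure on `ℝ⁵` under which the partial derivatives of `û` are square-integrable,
and let `C = ∫ ∇û ∇ûᵀ dγ` entrywise. Then `rank C ≤ 2`, and every eigenvector of `C` with
nonzero eigenvalue lies in the span of `a = (0,0,1,1,−2)` and `b = (−1/2,0,0,−1/2,1)`. -/
theorem stmt15 (ℓ : ℝ) (hℓ : 0 < ℓ)
    (u : EuclideanSpace ℝ (Fin 5) → ℝ)
    (hu : ∀ ξ : EuclideanSpace ℝ (Fin 5),
      u ξ = -(Real.exp (ξ 2)) * (Real.exp (ξ 3) / Real.exp (2 * ξ 4)) *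
        (1 - (Real.exp (ξ 4) * ℓ / Real.sqrt (Real.exp (ξ 3) * Real.exp (ξ 0))) *
          (Real.cosh (Real.exp (ξ 4) * ℓ / Real.sqrt (Real.exp (ξ 3) * Real.exp (ξ 0))) /
           Real.sinh (Real.exp (ξ 4) * ℓ / Real.sqrt (Real.exp (ξ 3) * Real.exp (ξ 0))))))
    (γ : Measure (EuclideanSpace ℝ (Fin 5))) [IsProbabilityMeasure γ]
    (hL2 : ∀ i : Fin 5, MemLp (fun ξ => gradient u ξ i) 2 γ)
    (C : Matrix (Fin 5) (Fin 5) ℝ)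
    (hC : ∀ i j, C i j = ∫ ξ, gradient u ξ i * gradient u ξ j ∂γ)
    (a b : EuclideanSpace ℝ (Fin 5))
    (ha : a = !₂[0, 0, 1, 1, -2]) (hb : b = !₂[-1/2, 0, 0, -1/2, 1]) :
    C.rank ≤ 2 ∧
    ∀ (lam : ℝ) (w : EuclideanSpace ℝ (Fin 5)), lam ≠ 0 → C *ᵥ w = lam • w →
      w ∈ Submodule.span ℝ ({a, b} : Set (EuclideanSpace ℝ (Fin 5))) :=
  stmt15_general ℓ hℓ u hu γ hL2 C hC a b ha hb
end
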